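/- The 3×3 matrices α = [[y³, x², xy²], [xy, −y², x²], [x², −xy, −y³]] and β = [[y, 0, x], [x, −y², 0], [0, x, −y]] over ℂ[x,y] satisfy αβ = βα = (x³ + y⁴)·I₃, giving a matrix factorization of the E₆ singularity x³ + y⁴. -/
import Mathlib


open MvPolynomial

/-- The pair `(α, β)` with `α = [[y³, x², xy²], [xy, -y², x²], [x², -xy, -y³]]` and
`β = [[y, 0, x], [x, -y², 0], [0, x, -y]]` is a matrix factorization of the `E₆`
singularity `x³ + y⁴` over `ℂ[x,y]`. -/
theorem E6_matrix_factorization :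
    let x : MvPolynomial (Fin 2) ℂ := X 0
    let y : MvPolynomial (Fin 2) ℂ := X 1
    let α : Matrix (Fin 3) (Fin 3) (MvPolynomial (Fin 2) ℂ) :=
      !![y ^ 3, x ^ 2, x * y ^ 2; x * y, -(y ^ 2), x ^ 2; x ^ 2, -(x * y), -(y ^ 3)]
    let β : Matrix (Fin 3) (Fin 3) (MvPolynomial (Fin 2) ℂ) :=
      !![y, 0, x; x, -(y ^ 2), 0; 0, x, -y]
    α * β = (x ^ 3 + y ^ 4) • (1 : Matrix (Fin 3) (Fin 3) (MvPolynomial (Fin 2) ℂ))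
      ∧ β * α = (x ^ 3 + y ^ 4) • (1 : Matrix (Fin 3) (Fin 3) (MvPolynomial (Fin 2) ℂ)) := by
  intro x y α β
  constructor <;>
  · ext i j
    fin_cases i <;> fin_cases j <;>
      simp [α, β, Matrix.mul_apply, Fin.sum_univ_succ, Matrix.one_apply] <;> ring
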